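/- Let $0<a<1$ and $\varepsilon>0$, and let $\nu$ be a Borel probability measure on $\mathbb{R}^d$. Then for $\nu$-almost every $x$ there exists $r_0=r_0(x)\in(0,1)$ such that for all $r\in(0,r_0)$ and all $h_1,\dots,h_d$ with $h_i\geq r^a$ for every $i$, one has $\nu(D(x,h_1,\dots,h_d)) \leq \nu(D(x,r)) \prod_{i=1}^d (4h_i/r)^{1+\varepsilon}$. -/

import Mathlib

/-!
Cover ℝᵈ by the grid of cubes of side `r`. In each cell meeting the bad set
`E = {x | M ν(D(x,r)) < ν(D(x,h))}` pick a point `c` of `E`; the part of `E` in that cell lies in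
`D(c,r)`, so `M` times its mass is at most `ν(D(c,h))`, and every point lies in at most
`∏ 4hᵢ/r` of the boxes `D(c,h)`. Hence `ν(E) ≤ ν(ℝᵈ) ∏ (4hᵢ/r) / M`.
At the dyadic scales `r = 2⁻ⁿ`, `hᵢ = 2^(jᵢ-n)` with `M = ∏ (2^jᵢ)^(1+ε)` this is `∏ 4·2^(-ε jᵢ)`,
which is summable over `n` and over `jᵢ ≥ n(1-a)`; by Borel–Cantelli almost every `x` is good at
all small dyadic scales. Rounding a general `r` down and each `hᵢ` up to a power of two costs a
factor `2` in each, which the `4` absorbs.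
-/

open MeasureTheory Set Filter
open scoped ENNReal

theorem ENNReal.tsum_pi_prod_le_prod_tsum {ι κ : Type*} [Fintype ι] (f : ι → κ → ℝ≥0∞) :
    ∑' m : ι → κ, ∏ i, f i (m i) ≤ ∏ i, ∑' k, f i k := by
  classical
  rw [ENNReal.tsum_eq_iSup_sum]
  refine iSup_le fun s => ?_
  calc ∑ m ∈ s, ∏ i, f i (m i)
      ≤ ∑ m ∈ Fintype.piFinset fun i => s.image (· i), ∏ i, f i (m i) :=
        Finset.sum_le_sum_of_subset fun m hm =>
          Fintype.mem_piFinset.2 fun i => Finset.mem_image_of_mem _ hm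
    _ = ∏ i, ∑ k ∈ s.image (· i), f i k := (Finset.prod_univ_sum _ _).symm
    _ ≤ ∏ i, ∑' k, f i k := Finset.prod_le_prod' fun i _ => ENNReal.sum_le_tsum _

theorem tsum_tsum_prod_geometric_ne_top {ι : Type*} [Fintype ι] [Nonempty ι] {C q : ℝ≥0∞}
    (hC : C ≠ ∞) (hq : q < 1) {θ : ℝ} (hθ : 0 < θ) :
    ∑' n : ℕ, ∑' m : ι → ℕ, ∏ i, C * q ^ (⌈n * θ⌉₊ + m i) ≠ ∞ := by
  set K := C * (1 - q)⁻¹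
  have hK : K ≠ ∞ := ENNReal.mul_ne_top hC (ENNReal.inv_ne_top.2 (tsub_pos_of_lt hq).ne')
  have hinner : ∀ n : ℕ, ∑' m : ι → ℕ, ∏ i, C * q ^ (⌈n * θ⌉₊ + m i) ≤
      K ^ Fintype.card ι * (q ^ θ) ^ n := by
    intro n
    calc ∑' m : ι → ℕ, ∏ i, C * q ^ (⌈n * θ⌉₊ + m i)
        ≤ ∏ _i : ι, ∑' k, C * q ^ (⌈n * θ⌉₊ + k) :=
          ENNReal.tsum_pi_prod_le_prod_tsum fun _ k => C * q ^ (⌈n * θ⌉₊ + k)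
      _ = K ^ Fintype.card ι * (q ^ ⌈n * θ⌉₊) ^ Fintype.card ι := by
          simp only [pow_add, ← mul_assoc, ENNReal.tsum_mul_left, ENNReal.tsum_geometric,
            Finset.prod_const, Finset.card_univ, K]
          ring
      _ ≤ K ^ Fintype.card ι * q ^ ⌈n * θ⌉₊ :=
          mul_le_mul_right (pow_le_of_le_one zero_le (pow_le_one₀ zero_le hq.le)
            (Fintype.card_ne_zero (α := ι))) _
      _ ≤ K ^ Fintype.card ι * (q ^ θ) ^ n := by
          refine mul_le_mul_right ?_ _
          rw [← ENNReal.rpow_natCast, ← ENNReal.rpow_natCast, ← ENNReal.rpow_mul]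
          exact ENNReal.rpow_le_rpow_of_exponent_ge hq.le (by rw [mul_comm]; exact Nat.le_ceil _)
  refine ne_top_of_le_ne_top ?_ (ENNReal.tsum_le_tsum hinner)
  rw [ENNReal.tsum_mul_left, ENNReal.tsum_geometric]
  exact ENNReal.mul_ne_top (ENNReal.pow_ne_top hK)
    (ENNReal.inv_ne_top.2 (tsub_pos_of_lt (ENNReal.rpow_lt_one hq hθ)).ne')

theorem ae_eventually_forall_notMem {α κ : Type*} [MeasurableSpace α] {μ : Measure α}
    [Countable κ] {s : ℕ → κ → Set α} (hs : ∑' n, ∑' k, μ (s n k) ≠ ∞) :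
    ∀ᵐ x ∂μ, ∀ᶠ n in atTop, ∀ k, x ∉ s n k := by
  have hs' : ∑' n, μ (⋃ k, s n k) ≠ ∞ :=
    ne_top_of_le_ne_top hs (ENNReal.tsum_le_tsum fun n => measure_iUnion_le _)
  filter_upwards [ae_eventually_notMem hs'] with x hx
  simpa only [mem_iUnion, not_exists] using hx

section Box

variable {ι : Type*}

def box (x h : ι → ℝ) : Set (ι → ℝ) :=
  univ.pi fun i => Icc (x i - h i) (x i + h i)

theorem measurableSet_box [Countable ι] (x h : ι → ℝ) : MeasurableSet (box x h) :=
  MeasurableSet.univ_pi fun _ => measurableSet_Icc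

theorem box_mono {x h h' : ι → ℝ} (hh : h ≤ h') : box x h ⊆ box x h' :=
  pi_mono fun i _ => Icc_subset_Icc (by linarith [hh i]) (by linarith [hh i])

theorem mem_box_comm {x y h : ι → ℝ} : y ∈ box x h ↔ x ∈ box y h := by
  simp only [box, mem_univ_pi, mem_Icc]
  exact forall_congr' fun i => ⟨fun ⟨h1, h2⟩ => ⟨by linarith, by linarith⟩,
    fun ⟨h1, h2⟩ => ⟨by linarith, by linarith⟩⟩

/-- The cells `∏ [wᵢ r, (wᵢ + 1) r)` of the grid `r ℤ^ι` are the fibres of `gridIndex r`. -/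
noncomputable def gridIndex (r : ℝ) (x : ι → ℝ) : ι → ℤ := fun i => ⌊x i / r⌋

theorem mem_box_of_gridIndex_eq {r : ℝ} (hr : 0 < r) {x y : ι → ℝ}
    (hxy : gridIndex r x = gridIndex r y) : y ∈ box x fun _ => r := by
  simp only [box, mem_univ_pi, mem_Icc]
  intro i
  have h := Int.abs_sub_lt_one_of_floor_eq_floor (congrFun hxy i)
  rw [← sub_div, abs_div, abs_of_pos hr, div_lt_one hr, abs_sub_lt_iff] at h
  constructor <;> linarith

theorem gridIndex_mem_piFinset [Fintype ι] [DecidableEq ι] {r : ℝ} (hr : 0 < r)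
    {x y h : ι → ℝ} (hx : x ∈ box y h) :
    gridIndex r x ∈ Fintype.piFinset fun i => Finset.Icc ⌊(y i - h i) / r⌋ ⌊(y i + h i) / r⌋ :=
  Fintype.mem_piFinset.2 fun i =>
    Finset.mem_Icc.2 ⟨Int.floor_mono (div_le_div_of_nonneg_right (hx i (mem_univ i)).1 hr.le),
      Int.floor_mono (div_le_div_of_nonneg_right (hx i (mem_univ i)).2 hr.le)⟩

theorem card_Icc_floor_div_le {r s : ℝ} (hr : 0 < r) (hrs : r ≤ s) (t : ℝ) :
    ((Finset.Icc ⌊(t - s) / r⌋ ⌊(t + s) / r⌋).card : ℝ) ≤ 4 * s / r := by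
  have hfloor : ⌊(t - s) / r⌋ ≤ ⌊(t + s) / r⌋ := Int.floor_mono (by gcongr; linarith)
  have hcard : ((Finset.Icc ⌊(t - s) / r⌋ ⌊(t + s) / r⌋).card : ℝ) =
      ⌊(t + s) / r⌋ + 1 - ⌊(t - s) / r⌋ := by
    rw [Int.card_Icc, ← Int.cast_natCast, Int.toNat_of_nonneg (by omega)]
    push_cast
    ring
  have hsr : 1 ≤ s / r := (one_le_div hr).2 hrs
  have hwidth : (t + s) / r - (t - s) / r = 2 * (s / r) := by ring
  rw [hcard, mul_div_assoc]
  linarith [Int.floor_le ((t + s) / r), Int.sub_one_lt_floor ((t - s) / r)]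

theorem tsum_indicator_box_le [Fintype ι] {r : ℝ} (hr : 0 < r) {h : ι → ℝ} (hrh : ∀ i, r ≤ h i)
    {c : (ι → ℤ) → ι → ℝ} (hc : ∀ w, gridIndex r (c w) = w) (y : ι → ℝ) :
    ∑' w, (box (c w) h).indicator 1 y ≤ ∏ i, ENNReal.ofReal (4 * h i / r) := by
  classical
  set T := Fintype.piFinset fun i => Finset.Icc ⌊(y i - h i) / r⌋ ⌊(y i + h i) / r⌋
  have hsupp : ∀ w ∉ T, (box (c w) h).indicator (1 : (ι → ℝ) → ℝ≥0∞) y = 0 := fun w hw =>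
    indicator_of_notMem (fun hy => hw (hc w ▸ gridIndex_mem_piFinset hr (mem_box_comm.1 hy))) _
  calc ∑' w, (box (c w) h).indicator 1 y
      = ∑ w ∈ T, (box (c w) h).indicator 1 y := tsum_eq_sum hsupp
    _ ≤ ∑ _w ∈ T, 1 := Finset.sum_le_sum fun w _ => indicator_le_self _ _ y
    _ = ∏ i, ((Finset.Icc ⌊(y i - h i) / r⌋ ⌊(y i + h i) / r⌋).card : ℝ≥0∞) := by
        simp [T, Fintype.card_piFinset]
    _ ≤ ∏ i, ENNReal.ofReal (4 * h i / r) := Finset.prod_le_prod' fun i _ => by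
        rw [← ENNReal.ofReal_natCast]
        exact ENNReal.ofReal_le_ofReal (card_Icc_floor_div_le hr (hrh i) (y i))

theorem mul_measure_setOf_mul_measure_box_lt_le [Fintype ι] (ν : Measure (ι → ℝ)) {r : ℝ}
    (hr : 0 < r) {h : ι → ℝ} (hrh : ∀ i, r ≤ h i) (M : ℝ≥0∞) :
    M * ν {x | M * ν (box x fun _ => r) < ν (box x h)} ≤
      (∏ i, ENNReal.ofReal (4 * h i / r)) * ν univ := by
  set E := {x | M * ν (box x fun _ => r) < ν (box x h)}
  have hcell : ∀ w, ∃ c, gridIndex r c = w ∧ M * ν (E ∩ gridIndex r ⁻¹' {w}) ≤ ν (box c h) := by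
    intro w
    rcases (E ∩ gridIndex r ⁻¹' {w}).eq_empty_or_nonempty with hempty | ⟨c, hcE, hcw⟩
    · refine ⟨fun i => w i * r, ?_, by simp [hempty]⟩
      funext i
      simp [gridIndex, hr.ne']
    · refine ⟨c, hcw, ?_⟩
      calc M * ν (E ∩ gridIndex r ⁻¹' {w}) ≤ M * ν (box c fun _ => r) := by
            gcongr
            rintro y ⟨-, hyw⟩
            exact mem_box_of_gridIndex_eq hr (hcw.trans hyw.symm)
        _ ≤ ν (box c h) := hcE.le
  choose c hcw hc using hcell
  calc M * ν E ≤ M * ∑' w, ν (E ∩ gridIndex r ⁻¹' {w}) := by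
        gcongr
        exact (measure_mono (show E ⊆ ⋃ w, E ∩ gridIndex r ⁻¹' {w} from
          fun y hy => mem_iUnion.2 ⟨gridIndex r y, hy, rfl⟩)).trans
          (measure_iUnion_le _)
    _ = ∑' w, M * ν (E ∩ gridIndex r ⁻¹' {w}) := ENNReal.tsum_mul_left.symm
    _ ≤ ∑' w, ν (box (c w) h) := ENNReal.tsum_le_tsum hc
    _ = ∑' w, ∫⁻ y, (box (c w) h).indicator 1 y ∂ν := by
        simp only [lintegral_indicator_one (measurableSet_box _ _)]
    _ = ∫⁻ y, ∑' w, (box (c w) h).indicator 1 y ∂ν :=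
        (lintegral_tsum fun w =>
          (measurable_one.indicator (measurableSet_box _ _)).aemeasurable).symm
    _ ≤ ∫⁻ _, ∏ i, ENNReal.ofReal (4 * h i / r) ∂ν :=
        lintegral_mono (tsum_indicator_box_le hr hrh hcw)
    _ = (∏ i, ENNReal.ofReal (4 * h i / r)) * ν univ := lintegral_const _

end Box

theorem two_pow_rpow_one_add_mul (j : ℕ) (ε : ℝ) :
    ((2 : ℝ) ^ j) ^ (1 + ε) * ((2 : ℝ) ^ (-ε)) ^ j = 2 ^ j := by
  rw [Real.rpow_add (by positivity), Real.rpow_one, Real.rpow_pow_comm two_pos.le (-ε) j,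
    mul_assoc, ← Real.rpow_add (by positivity), add_neg_cancel, Real.rpow_zero, mul_one]

theorem exists_two_pow_inv_le_le_two_mul {r : ℝ} (hr : 0 < r) {N : ℕ}
    (hrN : r < ((2 : ℝ) ^ N)⁻¹) :
    ∃ n, N ≤ n ∧ ((2 : ℝ) ^ n)⁻¹ ≤ r ∧ r ≤ 2 * ((2 : ℝ) ^ n)⁻¹ := by
  have hNr : (2 : ℝ) ^ N < r⁻¹ := (lt_inv_comm₀ hr (by positivity)).1 hrN
  obtain ⟨k, hk1, hk2⟩ := exists_nat_pow_near (one_le_pow₀ one_le_two |>.trans hNr.le) one_lt_two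
  refine ⟨k + 1, ?_, (inv_le_comm₀ (by positivity) hr).2 hk2.le, ?_⟩
  · exact ((pow_lt_pow_iff_right₀ one_lt_two).1 (hNr.trans hk2)).le
  · rw [pow_succ', mul_inv, ← mul_assoc, mul_inv_cancel₀ (by norm_num : (2 : ℝ) ≠ 0), one_mul]
    exact (le_inv_comm₀ hr (by positivity)).2 hk1

theorem exists_nat_two_pow_gt_le_two_mul {s t : ℝ} (hs : 0 ≤ s) (hst : 2 ^ s ≤ t) :
    ∃ j : ℕ, s ≤ j ∧ t < 2 ^ j ∧ 2 ^ j ≤ 2 * t := by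
  obtain ⟨k, hk1, hk2⟩ := exists_nat_pow_near ((Real.one_le_rpow one_le_two hs).trans hst)
    one_lt_two
  refine ⟨k + 1, ?_, hk2, by rw [pow_succ]; linarith⟩
  have hsk : (2 : ℝ) ^ s < 2 ^ ((k + 1 : ℕ) : ℝ) := by
    rw [Real.rpow_natCast]
    exact hst.trans_lt hk2
  exact ((Real.rpow_lt_rpow_left_iff one_lt_two).1 hsk).le

section Dyadic

variable {ι : Type*} [Fintype ι]

theorem measure_setOf_dyadic_lt_le (ν : Measure (ι → ℝ)) (ε : ℝ) (n : ℕ) (j : ι → ℕ) :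
    ν {x | (∏ i, ENNReal.ofReal (((2 : ℝ) ^ j i) ^ (1 + ε))) *
        ν (box x fun _ => ((2 : ℝ) ^ n)⁻¹) < ν (box x fun i => 2 ^ j i / 2 ^ n)} ≤
      (∏ i, 4 * ENNReal.ofReal ((2 : ℝ) ^ (-ε)) ^ j i) * ν univ := by
  set M := ∏ i, ENNReal.ofReal (((2 : ℝ) ^ j i) ^ (1 + ε))
  have hM0 : M ≠ 0 := Finset.prod_ne_zero_iff.2 fun i _ =>
    (ENNReal.ofReal_pos.2 (by positivity)).ne'
  have hMtop : M ≠ ∞ := ENNReal.prod_ne_top fun i _ => ENNReal.ofReal_ne_top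
  rw [← ENNReal.mul_le_mul_iff_right hM0 hMtop]
  refine (mul_measure_setOf_mul_measure_box_lt_le ν (by positivity) (fun i => ?_) M).trans ?_
  · rw [div_eq_mul_inv]
    exact le_mul_of_one_le_left (by positivity) (one_le_pow₀ one_le_two)
  rw [← mul_assoc, ← Finset.prod_mul_distrib]
  gcongr with i
  rw [← ENNReal.ofReal_pow (by positivity), ← ENNReal.ofReal_ofNat 4,
    ← ENNReal.ofReal_mul (by positivity), ← ENNReal.ofReal_mul (by positivity)]
  refine ENNReal.ofReal_le_ofReal (le_of_eq ?_)
  rw [mul_left_comm, two_pow_rpow_one_add_mul]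
  field_simp

theorem ae_eventually_measure_box_two_pow_le (ν : Measure (ι → ℝ)) [IsFiniteMeasure ν]
    [Nonempty ι] {ε θ : ℝ} (hε : 0 < ε) (hθ : 0 < θ) :
    ∀ᵐ x ∂ν, ∀ᶠ n : ℕ in atTop, ∀ j : ι → ℕ, (∀ i, n * θ ≤ j i) →
      ν (box x fun i => 2 ^ j i / 2 ^ n) ≤
        (∏ i, ENNReal.ofReal (((2 : ℝ) ^ j i) ^ (1 + ε))) *
          ν (box x fun _ => ((2 : ℝ) ^ n)⁻¹) := by
  set q := ENNReal.ofReal ((2 : ℝ) ^ (-ε))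
  have hq : q < 1 :=
    ENNReal.ofReal_lt_one.2 (Real.rpow_lt_one_of_one_lt_of_neg one_lt_two (neg_neg_of_pos hε))
  -- the bad sets at scale `n`, indexed by the excess `m = j - ⌈nθ⌉₊`
  set bad : ℕ → (ι → ℕ) → Set (ι → ℝ) := fun n m =>
    {x | (∏ i, ENNReal.ofReal (((2 : ℝ) ^ (⌈n * θ⌉₊ + m i)) ^ (1 + ε))) *
        ν (box x fun _ => ((2 : ℝ) ^ n)⁻¹) < ν (box x fun i => 2 ^ (⌈n * θ⌉₊ + m i) / 2 ^ n)}
  have hsum : ∑' n, ∑' m, ν (bad n m) ≠ ∞ := by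
    refine ne_top_of_le_ne_top (ENNReal.mul_ne_top (tsum_tsum_prod_geometric_ne_top (ι := ι)
      (C := 4) (by simp) hq hθ) (measure_ne_top ν univ)) ?_
    rw [← ENNReal.tsum_mul_right]
    refine ENNReal.tsum_le_tsum fun n => ?_
    rw [← ENNReal.tsum_mul_right]
    exact ENNReal.tsum_le_tsum fun m => measure_setOf_dyadic_lt_le ν ε n _
  filter_upwards [ae_eventually_forall_notMem hsum] with x hx
  filter_upwards [hx] with n hn j hj
  have hceil : ∀ i, ⌈n * θ⌉₊ + (j i - ⌈n * θ⌉₊) = j i := fun i =>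
    Nat.add_sub_cancel' (Nat.ceil_le.2 (hj i))
  simpa only [bad, mem_ofPred_eq, not_lt, hceil] using hn fun i => j i - ⌈n * θ⌉₊

theorem measure_box_le_of_forall_two_pow (ν : Measure (ι → ℝ)) {x : ι → ℝ} {n : ℕ}
    {a p r : ℝ} (ha : 0 ≤ a) (ha1 : a ≤ 1) (hp : 0 ≤ p)
    (hx : ∀ j : ι → ℕ, (∀ i, n * (1 - a) ≤ j i) →
      ν (box x fun i => 2 ^ j i / 2 ^ n) ≤
        (∏ i, ENNReal.ofReal (((2 : ℝ) ^ j i) ^ p)) * ν (box x fun _ => ((2 : ℝ) ^ n)⁻¹))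
    (hnr : ((2 : ℝ) ^ n)⁻¹ ≤ r) (hrn : r ≤ 2 * ((2 : ℝ) ^ n)⁻¹) {h : ι → ℝ}
    (hh : ∀ i, r ^ a ≤ h i) :
    ν (box x h) ≤ ν (box x fun _ => r) * ∏ i, ENNReal.ofReal ((4 * h i / r) ^ p) := by
  have hr : 0 < r := lt_of_lt_of_le (by positivity) hnr
  have hscale : ∀ i, (2 : ℝ) ^ (n * (1 - a)) ≤ h i * 2 ^ n := by
    intro i
    calc (2 : ℝ) ^ (n * (1 - a)) = ((2 : ℝ) ^ n)⁻¹ ^ a * 2 ^ n := by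
          rw [Real.inv_rpow (by positivity), ← Real.rpow_natCast, ← Real.rpow_mul (by norm_num),
            ← Real.rpow_neg (by norm_num), ← Real.rpow_add two_pos]
          ring_nf
      _ ≤ r ^ a * 2 ^ n := by gcongr
      _ ≤ h i * 2 ^ n := by gcongr; exact hh i
  choose j hjn hj hj2 using fun i =>
    exists_nat_two_pow_gt_le_two_mul (mul_nonneg n.cast_nonneg (sub_nonneg.2 ha1)) (hscale i)
  calc ν (box x h) ≤ ν (box x fun i => 2 ^ j i / 2 ^ n) :=
        measure_mono (box_mono fun i => (le_div_iff₀ (by positivity)).2 (hj i).le)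
    _ ≤ (∏ i, ENNReal.ofReal (((2 : ℝ) ^ j i) ^ p)) * ν (box x fun _ => ((2 : ℝ) ^ n)⁻¹) :=
        hx j hjn
    _ ≤ (∏ i, ENNReal.ofReal ((4 * h i / r) ^ p)) * ν (box x fun _ => r) := by
        gcongr with i
        · have hpow : (2 : ℝ) ^ n ≤ 2 / r := by
            rw [le_div_iff₀ hr]; rw [le_mul_inv_iff₀ (by positivity)] at hrn; linarith
          have hhi : 0 ≤ h i := (Real.rpow_nonneg hr.le a).trans (hh i)
          calc (2 : ℝ) ^ j i ≤ 2 * (h i * 2 ^ n) := hj2 i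
            _ ≤ 2 * (h i * (2 / r)) := by gcongr
            _ = 4 * h i / r := by ring
        · exact box_mono fun _ => hnr
    _ = ν (box x fun _ => r) * ∏ i, ENNReal.ofReal ((4 * h i / r) ^ p) := mul_comm _ _

end Dyadic

theorem stmt2 {d : ℕ} (a ε : ℝ) (ha : 0 < a) (ha1 : a < 1) (hε : 0 < ε)
    (ν : Measure (Fin d → ℝ)) [IsProbabilityMeasure ν] :
    ∀ᵐ x ∂ν, ∃ r0 : ℝ, r0 ∈ Ioo (0 : ℝ) 1 ∧
      ∀ r : ℝ, 0 < r → r < r0 → ∀ h : Fin d → ℝ, (∀ i, r ^ a ≤ h i) →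
        ν (univ.pi fun i => Icc (x i - h i) (x i + h i)) ≤
          ν (univ.pi fun i => Icc (x i - r) (x i + r)) *
            ∏ i, ENNReal.ofReal ((4 * h i / r) ^ (1 + ε)) := by
  rcases isEmpty_or_nonempty (Fin d) with hd | hd
  · have hbox : ∀ s : Fin d → Set ℝ, univ.pi s = univ := fun s =>
      eq_univ_of_forall fun y => mem_univ_pi.2 fun i => isEmptyElim i
    exact .of_forall fun x => ⟨1 / 2, by norm_num, fun r _ _ h _ => by simp [hbox]⟩
  filter_upwards [ae_eventually_measure_box_two_pow_le ν hε (sub_pos.2 ha1)] with x hx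
  obtain ⟨N, hN⟩ := eventually_atTop.1 hx
  refine ⟨((2 : ℝ) ^ (N + 1))⁻¹, ⟨by positivity, inv_lt_one_of_one_lt₀
    (one_lt_pow₀ one_lt_two N.succ_ne_zero)⟩, fun r hr hrN h hh => ?_⟩
  obtain ⟨n, hNn, hnr, hrn⟩ := exists_two_pow_inv_le_le_two_mul hr hrN
  exact measure_box_le_of_forall_two_pow ν ha.le ha1.le (by linarith) (hN n (by omega)) hnr hrn hh
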